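/- Stopping time lemma: Let μ be doubling, q ∈ [1,∞), α > 0. There exist M > 0 and c > 0, depending only on q, α and the doubling constant, such that for every measurable function g on X⁺ and every open ball B ⊂ X of radius r, μ{x ∈ B : A_q^α(g|r)(x) ≤ M · C_q^α(g)(x)} ≥ c · μ(B). -/

import Mathlib

open MeasureTheory Metric Set
open scoped ENNReal NNReal

noncomputable section

variable {X : Type*}

/-- The measure `dμ(y) dt/t` on `X⁺ = X × (0,∞)`, modelled on `X × ℝ`
(supported on `{t > 0}`). -/
def upHalf [MeasurableSpace X] (μ : Measure X) : Measure (X × ℝ) :=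
  μ.prod ((volume.restrict (Set.Ioi (0:ℝ))).withDensity fun t => ENNReal.ofReal t⁻¹)

/-- The measure `dμ(y) dt` on `X⁺` (supported on `{t > 0}`). -/
def upHalf' [MeasurableSpace X] (μ : Measure X) : Measure (X × ℝ) :=
  μ.prod (volume.restrict (Set.Ioi (0:ℝ)))

/-- Cone of aperture `α` with vertex `x`. -/
def coneAt [PseudoMetricSpace X] (α : ℝ) (x : X) : Set (X × ℝ) :=
  {p | dist p.1 x < α * p.2}

/-- Tent of aperture `α` over `O ⊆ X`: the complement in `X⁺` of the union of the
cones of aperture `α` with vertices outside `O`. -/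
def tentOver [PseudoMetricSpace X] (α : ℝ) (O : Set X) : Set (X × ℝ) :=
  {p | 0 < p.2 ∧ ∀ x ∉ O, α * p.2 ≤ dist p.1 x}

/-- The `α`-shadow of `C ⊆ X⁺`: points whose cone meets `C`. -/
def shadowOf [PseudoMetricSpace X] (α : ℝ) (C : Set (X × ℝ)) : Set X :=
  {x | ∃ p ∈ C, p ∈ coneAt α x}

/-- The operator `A_q^α`:
`A_q^α(f)(x) = (∬_{Γ^α(x)} |f(y,t)|^q dμ(y)/V(y,αt) dt/t)^{1/q}`. -/
def Afun [PseudoMetricSpace X] [MeasurableSpace X] (μ : Measure X) (q α : ℝ)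
    (f : X × ℝ → ℝ) (x : X) : ℝ≥0∞ :=
  (∫⁻ p in coneAt α x,
      ENNReal.ofReal (|f p| ^ q) / μ (ball p.1 (α * p.2)) ∂upHalf μ) ^ (1/q)

/-- The truncated operator `A_q^α(·|h)`, integrating over the truncated cone
`Γ_h^α(x)`. -/
def AfunT [PseudoMetricSpace X] [MeasurableSpace X] (μ : Measure X) (q α h : ℝ)
    (f : X × ℝ → ℝ) (x : X) : ℝ≥0∞ :=
  (∫⁻ p in coneAt α x ∩ {p : X × ℝ | p.2 < h},
      ENNReal.ofReal (|f p| ^ q) / μ (ball p.1 (α * p.2)) ∂upHalf μ) ^ (1/q)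

/-- The Carleson operator `C_q^α`:
`C_q^α(f)(x) = sup_{B ∋ x} (μ(B)⁻¹ ∬_{T^α(B)} |f(y,t)|^q dμ(y) dt/t)^{1/q}`,
the supremum being over open balls containing `x`. -/
def Cfun [PseudoMetricSpace X] [MeasurableSpace X] (μ : Measure X) (q α : ℝ)
    (f : X × ℝ → ℝ) (x : X) : ℝ≥0∞ :=
  ⨆ (z : X) (ρ : ℝ) (_ : 0 < ρ ∧ x ∈ ball z ρ),
    ((μ (ball z ρ))⁻¹ *
      ∫⁻ p in tentOver α (ball z ρ), ENNReal.ofReal (|f p| ^ q) ∂upHalf μ) ^ (1/q)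

/-- The tent space quasi-norm `‖f‖_{T^{p,q,α}} = ‖A_q^α(f)‖_{L^p(X)}`. -/
def tNorm [PseudoMetricSpace X] [MeasurableSpace X] (μ : Measure X) (p q α : ℝ)
    (f : X × ℝ → ℝ) : ℝ≥0∞ :=
  (∫⁻ x, Afun μ q α f x ^ p ∂μ) ^ (1/p)

/-- The uncentred Hardy–Littlewood maximal operator applied to an
`ℝ≥0∞`-valued function. -/
def maxFun [PseudoMetricSpace X] [MeasurableSpace X] (μ : Measure X)
    (g : X → ℝ≥0∞) (x : X) : ℝ≥0∞ :=
  ⨆ (z : X) (ρ : ℝ) (_ : 0 < ρ ∧ x ∈ ball z ρ),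
    (μ (ball z ρ))⁻¹ * ∫⁻ y in ball z ρ, g y ∂μ

/-- `μ` is doubling: `V(x,2r) ≤ C V(x,r)` for all `x`, `r > 0`. -/
def DoublingMeas [PseudoMetricSpace X] [MeasurableSpace X] (μ : Measure X) : Prop :=
  ∃ C > (0:ℝ), ∀ (x : X) (r : ℝ), 0 < r →
    μ (ball x (2 * r)) ≤ ENNReal.ofReal C * μ (ball x r)

/-!
By Fubini, the integral of `A_q^α(g|r)^q` over `B = B(z,r)` is at most the integral `K` of
`|g|^q` over the tent over `B' = B(z,(2α+1)r)`: a cone with vertex in `B` truncated at height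
`r` stays inside that tent, and the vertices of the cones through `(y,t)` form the ball
`B(y,αt)`, whose volume cancels the weight. Since `K / μ(B') ≤ C_q^α(g)^q` on `B` and
`μ(B') ≤ D μ(B)` by doubling, Chebyshev's inequality gives `A_q^α(g|r)^q ≤ 2D C_q^α(g)^q` on at
least half of `B`.
-/

section SecondCountable

variable [MetricSpace X] [MeasurableSpace X] [OpensMeasurableSpace X] (μ : Measure X)

theorem Set.Pairwise.countable_of_measure_ball_pos [SFinite μ]
    (hpos : ∀ (x : X) (r : ℝ), 0 < r → 0 < μ (ball x r)) {s : Set X} {ε : ℝ} (hε : 0 < ε)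
    (hs : s.Pairwise fun a b => ε ≤ dist a b) : s.Countable := by
  have hdisj : Pairwise (Function.onFun Disjoint fun y : s => ball (y : X) (ε / 2)) := by
    intro i j hij
    refine ball_disjoint_ball ?_
    linarith [hs i.2 j.2 (Subtype.coe_ne_coe.2 hij)]
  have := Measure.countable_meas_pos_of_disjoint_iUnion (μ := μ)
    (fun _ => measurableSet_ball) hdisj
  exact Set.countable_coe_iff.1 <| Set.countable_univ_iff.1 <|
    this.mono fun y _ => hpos _ _ (half_pos hε)

theorem secondCountableTopology_of_measure_ball_pos [SFinite μ]
    (hpos : ∀ (x : X) (r : ℝ), 0 < r → 0 < μ (ball x r)) : SecondCountableTopology X := by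
  refine Metric.secondCountable_of_almost_dense_set fun ε hε => ?_
  -- a maximal `ε`-separated set is `ε`-dense
  obtain ⟨s, hs⟩ := zorn_subset {s : Set X | s.Pairwise fun a b => ε ≤ dist a b}
    fun c hc hchain => ⟨⋃₀ c, (pairwise_sUnion hchain.directedOn).2 fun s hs => hc hs,
      fun _ => subset_sUnion_of_mem⟩
  refine ⟨s, hs.prop.countable_of_measure_ball_pos μ hpos hε, fun x => ?_⟩
  by_contra! hfar
  have hsep : insert x s ∈ {s : Set X | s.Pairwise fun a b => ε ≤ dist a b} :=
    pairwise_insert.2 ⟨hs.prop, fun b hb _ => ⟨(hfar b hb).le, by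
      rw [dist_comm]; exact (hfar b hb).le⟩⟩
  have hx := hfar x (hs.eq_of_subset hsep (subset_insert x s) ▸ mem_insert x s)
  simp only [dist_self] at hx
  exact hx.not_ge hε.le

end SecondCountable

theorem coneAt_inter_subset_tentOver [PseudoMetricSpace X] {α r : ℝ} (hα : 0 ≤ α) {z x : X}
    (hx : x ∈ ball z r) :
    coneAt α x ∩ {p | p.2 < r} ⊆ tentOver α (ball z ((2 * α + 1) * r)) := by
  rintro p ⟨hcone, hp⟩
  have hcone : dist p.1 x < α * p.2 := hcone
  have hp : p.2 < r := hp
  have ht : 0 < p.2 := pos_of_mul_pos_right (dist_nonneg.trans_lt hcone) hα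
  refine ⟨ht, fun y hy => ?_⟩
  rw [mem_ball, not_lt] at hy
  rw [mem_ball] at hx
  have := dist_triangle4 y p.1 x z
  rw [dist_comm y p.1] at this
  nlinarith [mul_le_mul_of_nonneg_left hp.le hα]

section Doubling

variable [PseudoMetricSpace X] [MeasurableSpace X] {μ : Measure X}

theorem measure_ball_two_pow_mul_le {C : ℝ}
    (hC : ∀ (x : X) (r : ℝ), 0 < r → μ (ball x (2 * r)) ≤ ENNReal.ofReal C * μ (ball x r))
    (k : ℕ) (x : X) {r : ℝ} (hr : 0 < r) :
    μ (ball x (2 ^ k * r)) ≤ ENNReal.ofReal C ^ k * μ (ball x r) := by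
  induction k with
  | zero => simp
  | succ k ih =>
    calc μ (ball x (2 ^ (k + 1) * r)) = μ (ball x (2 * (2 ^ k * r))) := by ring_nf
      _ ≤ ENNReal.ofReal C * μ (ball x (2 ^ k * r)) := hC x _ (by positivity)
      _ ≤ ENNReal.ofReal C * (ENNReal.ofReal C ^ k * μ (ball x r)) := by gcongr
      _ = ENNReal.ofReal C ^ (k + 1) * μ (ball x r) := by ring

theorem DoublingMeas.exists_measure_ball_mul_le (hμ : DoublingMeas μ) (s : ℝ) :
    ∃ D > (0 : ℝ), ∀ (x : X) (r : ℝ), 0 < r →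
      μ (ball x (s * r)) ≤ ENNReal.ofReal D * μ (ball x r) := by
  obtain ⟨C, hC, hdouble⟩ := hμ
  obtain ⟨k, hk⟩ := pow_unbounded_of_one_lt s one_lt_two
  refine ⟨C ^ k, by positivity, fun x r hr => ?_⟩
  calc μ (ball x (s * r)) ≤ μ (ball x (2 ^ k * r)) := by gcongr
    _ ≤ ENNReal.ofReal C ^ k * μ (ball x r) := measure_ball_two_pow_mul_le hdouble k x hr
    _ = ENNReal.ofReal (C ^ k) * μ (ball x r) := by rw [ENNReal.ofReal_pow hC.le]

end Doubling

theorem measure_div_two_le_measure_setOf_le [MeasurableSpace X] {μ : Measure X} {s : Set X}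
    {f : X → ℝ≥0∞} {c : ℝ≥0∞} (hf : AEMeasurable f (μ.restrict s)) (hs : μ s ≠ ∞)
    (h : ∫⁻ x in s, f x ∂μ ≤ c * (μ s / 2)) : μ s / 2 ≤ μ {x ∈ s | f x ≤ c} := by
  have hbad : μ.restrict s {x | c < f x} ≤ μ s / 2 := by
    rcases eq_or_ne c 0 with rfl | hc0
    · have hf0 : f =ᵐ[μ.restrict s] 0 :=
        (lintegral_eq_zero_iff' hf).1 (le_antisymm (by simpa using h) zero_le)
      exact (measure_mono_null (fun x (hx : 0 < f x) => hx.ne') (ae_iff.1 hf0)).trans_le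
        zero_le
    rcases eq_or_ne c ∞ with rfl | hctop
    · simp
    calc μ.restrict s {x | c < f x} ≤ μ.restrict s {x | c ≤ f x} :=
          measure_mono fun x (hx : c < f x) => hx.le
      _ ≤ (∫⁻ x in s, f x ∂μ) / c := meas_ge_le_lintegral_div hf hc0 hctop
      _ ≤ μ s / 2 * c / c := by rw [mul_comm]; gcongr
      _ = μ s / 2 := ENNReal.mul_div_cancel_right hc0 hctop
  calc μ s / 2 = μ s - μ s / 2 := (ENNReal.sub_half hs).symm
    _ ≤ μ s - μ (s ∩ {x | c < f x}) := by
        gcongr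
        rw [inter_comm]
        exact (Measure.le_restrict_apply s _).trans hbad
    _ ≤ μ (s \ (s ∩ {x | c < f x})) := le_measure_sdiff
    _ = μ {x ∈ s | f x ≤ c} := by congr 1; ext x; simp

instance [MeasurableSpace X] (μ : Measure X) [SFinite μ] : SFinite (upHalf μ) := by
  unfold upHalf; infer_instance

section Fubini

variable {Y : Type*} [MeasurableSpace X] [MeasurableSpace Y] {U : Set (X × Y)} {F : Y → ℝ≥0∞}

theorem setLIntegral_preimage_prodMk_eq (ν : Measure Y) (hU : MeasurableSet U) (x : X) :
    ∫⁻ y in Prod.mk x ⁻¹' U, F y ∂ν = ∫⁻ y, U.indicator (F ∘ Prod.snd) (x, y) ∂ν :=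
  (lintegral_indicator (measurable_prodMk_left hU) _).symm

theorem measurable_setLIntegral_preimage_prodMk (ν : Measure Y) [SFinite ν]
    (hU : MeasurableSet U) (hF : Measurable F) :
    Measurable fun x => ∫⁻ y in Prod.mk x ⁻¹' U, F y ∂ν := by
  simp_rw [setLIntegral_preimage_prodMk_eq ν hU]
  exact ((hF.comp measurable_snd).indicator hU).lintegral_prod_right'

theorem lintegral_setLIntegral_preimage_prodMk (μ : Measure X) (ν : Measure Y) [SFinite μ]
    [SFinite ν] (hU : MeasurableSet U) (hF : Measurable F) :
    ∫⁻ x, ∫⁻ y in Prod.mk x ⁻¹' U, F y ∂ν ∂μ = ∫⁻ y, μ ((·, y) ⁻¹' U) * F y ∂ν := by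
  simp_rw [setLIntegral_preimage_prodMk_eq ν hU]
  rw [lintegral_lintegral_swap (f := fun x y => U.indicator (F ∘ Prod.snd) (x, y))
    ((hF.comp measurable_snd).indicator hU).aemeasurable]
  congr with y
  rw [mul_comm, ← lintegral_indicator_const (measurable_prodMk_right hU)]
  rfl

end Fubini

section Cones

variable [MetricSpace X] [MeasurableSpace X] [BorelSpace X] [SecondCountableTopology X]
  (μ : Measure X) [SFinite μ]

theorem measurable_measure_ball_mul (α : ℝ) :
    Measurable fun p : X × ℝ => μ (ball p.1 (α * p.2)) :=
  measurable_measure_prodMk_left <|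
    measurableSet_lt (measurable_snd.dist measurable_fst.fst) (measurable_fst.snd.const_mul α)

theorem measurableSet_setOf_mem_coneAt_and_lt (α h : ℝ) :
    MeasurableSet {w : X × (X × ℝ) | w.2 ∈ coneAt α w.1 ∧ w.2.2 < h} :=
  (measurableSet_lt (measurable_snd.fst.dist measurable_fst)
    (measurable_snd.snd.const_mul α)).inter (measurableSet_lt measurable_snd.snd measurable_const)

theorem measurable_AfunT (q α h : ℝ) {f : X × ℝ → ℝ} (hf : Measurable f) :
    Measurable (AfunT μ q α h f) :=
  (measurable_setLIntegral_preimage_prodMk _ (measurableSet_setOf_mem_coneAt_and_lt α h)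
    ((hf.abs.pow_const q).ennreal_ofReal.div (measurable_measure_ball_mul μ α))).pow_const _

theorem setLIntegral_AfunT_rpow_le_tentOver {q α r : ℝ} (hq : 0 < q) (hα : 0 ≤ α)
    {g : X × ℝ → ℝ} (hg : Measurable g) (z : X) :
    ∫⁻ x in ball z r, AfunT μ q α r g x ^ q ∂μ
      ≤ ∫⁻ p in tentOver α (ball z ((2 * α + 1) * r)), ENNReal.ofReal (|g p| ^ q) ∂upHalf μ := by
  set U : Set (X × (X × ℝ)) := {w | w.2 ∈ coneAt α w.1 ∧ w.2.2 < r}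
  set G : X × ℝ → ℝ≥0∞ := fun p => ENNReal.ofReal (|g p| ^ q)
  set V : X × ℝ → ℝ≥0∞ := fun p => μ (ball p.1 (α * p.2))
  set T := tentOver α (ball z ((2 * α + 1) * r))
  have hsection (p : X × ℝ) :
      μ.restrict (ball z r) ((·, p) ⁻¹' U) * (G p / V p) ≤ T.indicator G p := by
    by_cases hp : p ∈ T
    · rw [indicator_of_mem hp]
      calc μ.restrict (ball z r) ((·, p) ⁻¹' U) * (G p / V p) ≤ V p * (G p / V p) := by
            gcongr
            refine (Measure.restrict_le_self _).trans (measure_mono fun x hx => ?_)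
            exact mem_ball_comm.1 hx.1
        _ ≤ G p := ENNReal.mul_div_le
    · suffices μ.restrict (ball z r) ((·, p) ⁻¹' U) = 0 by simp [this, hp]
      rw [Measure.restrict_apply' measurableSet_ball, ← measure_empty (μ := μ)]
      congr
      refine eq_empty_of_forall_notMem fun x ⟨hxp, hxB⟩ => hp ?_
      exact coneAt_inter_subset_tentOver hα hxB hxp
  calc ∫⁻ x in ball z r, AfunT μ q α r g x ^ q ∂μ
      = ∫⁻ x in ball z r, ∫⁻ p in Prod.mk x ⁻¹' U, G p / V p ∂upHalf μ ∂μ := by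
        simp only [AfunT, one_div, ENNReal.rpow_inv_rpow hq.ne']
        rfl
    _ = ∫⁻ p, μ.restrict (ball z r) ((·, p) ⁻¹' U) * (G p / V p) ∂upHalf μ :=
        lintegral_setLIntegral_preimage_prodMk _ _ (measurableSet_setOf_mem_coneAt_and_lt α r)
          ((hg.abs.pow_const q).ennreal_ofReal.div (measurable_measure_ball_mul μ α))
    _ ≤ ∫⁻ p, T.indicator G p ∂upHalf μ := lintegral_mono hsection
    _ ≤ ∫⁻ p in T, G p ∂upHalf μ := lintegral_indicator_le _ _

theorem measure_div_two_le_measure_setOf_AfunT_le_Cfun {q α r D : ℝ} (hq : 0 < q)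
    (hα : 0 ≤ α) (hr : 0 < r) (hD : 0 < D) {g : X × ℝ → ℝ} (hg : Measurable g) {z : X}
    (hpos : μ (ball z ((2 * α + 1) * r)) ≠ 0) (hfin : μ (ball z ((2 * α + 1) * r)) ≠ ∞)
    (hdouble : μ (ball z ((2 * α + 1) * r)) ≤ ENNReal.ofReal D * μ (ball z r)) :
    μ (ball z r) / 2 ≤ μ {x ∈ ball z r |
      AfunT μ q α r g x ≤ ENNReal.ofReal ((2 * D) ^ (1 / q)) * Cfun μ q α g x} := by
  set R := (2 * α + 1) * r
  have hrR : r ≤ R := by nlinarith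
  set K := ∫⁻ p in tentOver α (ball z R), ENNReal.ofReal (|g p| ^ q) ∂upHalf μ
  have hCfun (x : X) (hx : x ∈ ball z r) : ((μ (ball z R))⁻¹ * K) ^ (1 / q) ≤ Cfun μ q α g x :=
    le_iSup_of_le z <| le_iSup_of_le R <|
      le_iSup_of_le ⟨hr.trans_le hrR, ball_subset_ball hrR hx⟩ le_rfl
  set lam := ENNReal.ofReal (2 * D) * ((μ (ball z R))⁻¹ * K)
  have hK : K ≤ lam * (μ (ball z r) / 2) :=
    calc K = μ (ball z R) * (μ (ball z R))⁻¹ * K := by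
          rw [ENNReal.mul_inv_cancel hpos hfin, one_mul]
      _ ≤ ENNReal.ofReal D * μ (ball z r) * (μ (ball z R))⁻¹ * K := by gcongr
      _ = ENNReal.ofReal D * (2 * (μ (ball z r) / 2)) * (μ (ball z R))⁻¹ * K := by
          rw [ENNReal.mul_div_cancel two_ne_zero ENNReal.ofNat_ne_top]
      _ = lam * (μ (ball z r) / 2) := by
          simp only [lam, ENNReal.ofReal_mul zero_le_two, ENNReal.ofReal_ofNat]; ring
  have hgood : μ (ball z r) / 2 ≤ μ {x ∈ ball z r | AfunT μ q α r g x ^ q ≤ lam} :=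
    measure_div_two_le_measure_setOf_le ((measurable_AfunT μ q α r hg).pow_const q).aemeasurable
      (measure_ne_top_of_subset (ball_subset_ball hrR) hfin)
      ((setLIntegral_AfunT_rpow_le_tentOver μ hq hα hg z).trans hK)
  refine hgood.trans (measure_mono fun x hx => show _ ∧ _ from ⟨hx.1, ?_⟩)
  calc AfunT μ q α r g x = (AfunT μ q α r g x ^ q) ^ (1 / q) := by
        rw [one_div, ENNReal.rpow_rpow_inv hq.ne']
    _ ≤ lam ^ (1 / q) := by gcongr; exact hx.2
    _ = ENNReal.ofReal ((2 * D) ^ (1 / q)) * ((μ (ball z R))⁻¹ * K) ^ (1 / q) := by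
        rw [ENNReal.mul_rpow_of_nonneg _ _ (by positivity),
          ENNReal.ofReal_rpow_of_pos (by positivity)]
    _ ≤ ENNReal.ofReal ((2 * D) ^ (1 / q)) * Cfun μ q α g x := by gcongr; exact hCfun x hx.1

end Cones

/-- **Stopping time lemma.** If `μ` is doubling, `q ∈ [1,∞)` and `α > 0`, there
exist `M, c > 0` (depending only on `q`, `α` and the doubling constant) such
that for every measurable `g` on `X⁺` and every open ball `B = B(z,r)`,
`μ{x ∈ B : A_q^α(g|r)(x) ≤ M C_q^α(g)(x)} ≥ c μ(B)`. -/
theorem stopping_time_lemma [MetricSpace X] [MeasurableSpace X] [BorelSpace X]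
    (μ : Measure X) [SigmaFinite μ]
    (hpos : ∀ (x : X) (r : ℝ), 0 < r → 0 < μ (ball x r))
    (hfin : ∀ (x : X) (r : ℝ), 0 < r → μ (ball x r) < ∞)
    (hdb : DoublingMeas μ)
    (q α : ℝ) (hq : 1 ≤ q) (hα : 0 < α) :
    ∃ M > (0:ℝ), ∃ c > (0:ℝ), ∀ g : X × ℝ → ℝ, Measurable g →
      ∀ (z : X) (r : ℝ), 0 < r →
        ENNReal.ofReal c * μ (ball z r)
          ≤ μ {x ∈ ball z r |
              AfunT μ q α r g x ≤ ENNReal.ofReal M * Cfun μ q α g x} := by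
  -- makes `dist` measurable on `X × X`, as the Fubini argument needs
  have := secondCountableTopology_of_measure_ball_pos μ hpos
  obtain ⟨D, hD, hdouble⟩ := hdb.exists_measure_ball_mul_le (2 * α + 1)
  refine ⟨(2 * D) ^ (1 / q), by positivity, 1 / 2, by norm_num, fun g hg z r hr => ?_⟩
  have hR : 0 < (2 * α + 1) * r := by positivity
  rw [one_div, ENNReal.ofReal_inv_of_pos two_pos, ENNReal.ofReal_ofNat, ← ENNReal.div_eq_inv_mul]
  exact measure_div_two_le_measure_setOf_AfunT_le_Cfun μ (one_pos.trans_le hq) hα.le hr hD hg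
    (hpos z _ hR).ne' (hfin z _ hR).ne (hdouble z r hr)
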